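/- Let E be a real inner product space, n ≥ 1, p : Fin (n+1) → E a chain of points with total length L = ∑_{l=0}^{n−1} ‖p_{l+1} − p_l‖, p_o ∈ E, d_min ≥ 0, k₁, k₂ ≥ 0, and for each l < n let v_l : ℝ → ℝ be measurable. Define F = ∑_{l=0}^{n−1} ∫₀¹ ( k₁·‖p_l + r·(p_{l+1} − p_l) − p_o‖ + k₂·tanh(v_l(r)) ) dr. If F > k₁·( ((2n+1)/2)·L + n·d_min ) + k₂·n, then every point of the chain is at distance strictly greater than d_min from p_o: for all j < n and r ∈ [0,1], ‖p_j + r·(p_{j+1} − p_j) − p_o‖ > d_min. -/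

import Mathlib

open MeasureTheory

lemma my_continuous_tanh : Continuous Real.tanh := by
  have h : Real.tanh = fun x => Real.sinh x / Real.cosh x :=
    funext Real.tanh_eq_sinh_div_cosh
  rw [h]
  exact Real.continuous_sinh.div Real.continuous_cosh fun x => (Real.cosh_pos x).ne'

lemma my_abs_tanh_le_one (x : ℝ) : |Real.tanh x| ≤ 1 := by
  rw [Real.tanh_eq_sinh_div_cosh, abs_div, abs_of_pos (Real.cosh_pos x),
    div_le_one (Real.cosh_pos x)]
  have h := Real.cosh_sq_sub_sinh_sq x
  nlinarith [sq_abs (Real.sinh x), Real.cosh_pos x, abs_nonneg (Real.sinh x)]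

set_option maxHeartbeats 1600000 in
/-- contrapositive guarantee of Remark 2 of the paper: if the
cumulative safety index exceeds `k₁((2n+1)/2·L + n·d_min) + k₂·n`, then every
point of the robot chain is at distance strictly greater than `d_min` from
the operator. -/
theorem stmt_14 {E : Type*} [NormedAddCommGroup E] [InnerProductSpace ℝ E]
    (n : ℕ) (hn : 1 ≤ n)
    (p : Fin (n + 1) → E) (L : ℝ)
    (hL : L = ∑ l : Fin n, ‖p l.succ - p l.castSucc‖)
    (p_o : E) (d_min : ℝ) (hdmin : 0 ≤ d_min)
    (k₁ k₂ : ℝ) (hk₁ : 0 ≤ k₁) (hk₂ : 0 ≤ k₂)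
    (v : Fin n → ℝ → ℝ) (hv : ∀ l, Measurable (v l))
    (F : ℝ)
    (hF : F = ∑ l : Fin n, ∫ s in (0 : ℝ)..1,
        (k₁ * ‖p l.castSucc + s • (p l.succ - p l.castSucc) - p_o‖
          + k₂ * Real.tanh (v l s)))
    (hFbig : F > k₁ * ((2 * n + 1) / 2 * L + n * d_min) + k₂ * n) :
    ∀ j : Fin n, ∀ r ∈ Set.Icc (0 : ℝ) 1,
      d_min < ‖p j.castSucc + r • (p j.succ - p j.castSucc) - p_o‖ := by
  by_contra hcon
  push_neg at hcon
  obtain ⟨j, r, hr, hle⟩ := hcon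
  obtain ⟨hr0, hr1⟩ := hr
  set q : E := p j.castSucc + r • (p j.succ - p j.castSucc) with hq
  have hLnn : 0 ≤ L := hL ▸ Finset.sum_nonneg (fun _ _ => norm_nonneg _)
  -- the auxiliary sequence of vertices
  set f : ℕ → E := fun i => p ⟨min i n, Nat.lt_succ_of_le (min_le_right i n)⟩ with hf
  have hfa : ∀ a : Fin (n + 1), f a.val = p a := by
    intro a
    simp only [hf]
    congr 1
    exact Fin.ext (by simp [Nat.min_eq_left (Nat.le_of_lt_succ a.isLt)])
  have hsum : ∑ i ∈ Finset.range n, dist (f i) (f (i + 1)) = L := by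
    rw [hL, ← Fin.sum_univ_eq_sum_range (fun i => dist (f i) (f (i + 1))) n]
    refine Finset.sum_congr rfl fun l _ => ?_
    have h1 : f l.val = p l.castSucc := by
      have := hfa l.castSucc
      simpa using this
    have h2 : f (l.val + 1) = p l.succ := by
      have := hfa l.succ
      simpa using this
    rw [h1, h2, dist_eq_norm, norm_sub_rev]
  -- any two vertices are within distance L
  have hA : ∀ a b : Fin (n + 1), ‖p a - p b‖ ≤ L := by
    have key : ∀ a b : Fin (n + 1), (a : ℕ) ≤ (b : ℕ) → ‖p a - p b‖ ≤ L := by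
      intro a b hab
      have h1 := dist_le_Ico_sum_dist f hab
      have h2 : ∑ i ∈ Finset.Ico (a : ℕ) (b : ℕ), dist (f i) (f (i + 1)) ≤
          ∑ i ∈ Finset.range n, dist (f i) (f (i + 1)) := by
        refine Finset.sum_le_sum_of_subset_of_nonneg ?_ (fun _ _ _ => dist_nonneg)
        intro i hi
        simp only [Finset.mem_Ico] at hi
        simp only [Finset.mem_range]
        exact lt_of_lt_of_le hi.2 (Nat.le_of_lt_succ b.isLt)
      rw [hfa a, hfa b] at h1
      rw [← dist_eq_norm]
      calc dist (p a) (p b) ≤ _ := h1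
        _ ≤ _ := h2
        _ = L := hsum
    intro a b
    rcases le_total (a : ℕ) (b : ℕ) with hab | hab
    · exact key a b hab
    · rw [norm_sub_rev]; exact key b a hab
  -- every chain point is within distance L of q
  have hchain : ∀ l : Fin n, ∀ s ∈ Set.Icc (0 : ℝ) 1,
      ‖p l.castSucc + s • (p l.succ - p l.castSucc) - q‖ ≤ L := by
    intro l s hs
    obtain ⟨hs0, hs1⟩ := hs
    have hdecomp : p l.castSucc + s • (p l.succ - p l.castSucc) - q
        = ((1 - s) * (1 - r)) • (p l.castSucc - p j.castSucc)
          + ((1 - s) * r) • (p l.castSucc - p j.succ)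
          + (s * (1 - r)) • (p l.succ - p j.castSucc)
          + (s * r) • (p l.succ - p j.succ) := by
      rw [hq]; module
    rw [hdecomp]
    have h1 := hA l.castSucc j.castSucc
    have h2 := hA l.castSucc j.succ
    have h3 := hA l.succ j.castSucc
    have h4 := hA l.succ j.succ
    calc ‖_ + _ + _ + _‖
        ≤ ‖((1 - s) * (1 - r)) • (p l.castSucc - p j.castSucc)
            + ((1 - s) * r) • (p l.castSucc - p j.succ)
            + (s * (1 - r)) • (p l.succ - p j.castSucc)‖
          + ‖(s * r) • (p l.succ - p j.succ)‖ := norm_add_le _ _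
      _ ≤ (‖((1 - s) * (1 - r)) • (p l.castSucc - p j.castSucc)
            + ((1 - s) * r) • (p l.castSucc - p j.succ)‖
          + ‖(s * (1 - r)) • (p l.succ - p j.castSucc)‖)
          + ‖(s * r) • (p l.succ - p j.succ)‖ := by
            gcongr; exact norm_add_le _ _
      _ ≤ ((‖((1 - s) * (1 - r)) • (p l.castSucc - p j.castSucc)‖
            + ‖((1 - s) * r) • (p l.castSucc - p j.succ)‖)
          + ‖(s * (1 - r)) • (p l.succ - p j.castSucc)‖)
          + ‖(s * r) • (p l.succ - p j.succ)‖ := by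
            gcongr; exact norm_add_le _ _
      _ ≤ L := by
          rw [norm_smul, norm_smul, norm_smul, norm_smul]
          simp only [Real.norm_eq_abs]
          rw [abs_of_nonneg (by nlinarith : (0:ℝ) ≤ (1 - s) * (1 - r)),
            abs_of_nonneg (by nlinarith : (0:ℝ) ≤ (1 - s) * r),
            abs_of_nonneg (by nlinarith : (0:ℝ) ≤ s * (1 - r)),
            abs_of_nonneg (by nlinarith : (0:ℝ) ≤ s * r)]
          have ha := mul_le_mul_of_nonneg_left h1
            (by nlinarith : (0:ℝ) ≤ (1 - s) * (1 - r))
          have hb := mul_le_mul_of_nonneg_left h2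
            (by nlinarith : (0:ℝ) ≤ (1 - s) * r)
          have hc := mul_le_mul_of_nonneg_left h3
            (by nlinarith : (0:ℝ) ≤ s * (1 - r))
          have hd := mul_le_mul_of_nonneg_left h4
            (by nlinarith : (0:ℝ) ≤ s * r)
          have hone : (1 - s) * (1 - r) * L + (1 - s) * r * L
              + s * (1 - r) * L + s * r * L = L := by ring
          linarith
  -- distance of any chain point to the operator
  have hdist : ∀ l : Fin n, ∀ s ∈ Set.Icc (0 : ℝ) 1,
      ‖p l.castSucc + s • (p l.succ - p l.castSucc) - p_o‖ ≤ L + d_min := by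
    intro l s hs
    calc ‖p l.castSucc + s • (p l.succ - p l.castSucc) - p_o‖
        ≤ ‖p l.castSucc + s • (p l.succ - p l.castSucc) - q‖ + ‖q - p_o‖ := by
          have : p l.castSucc + s • (p l.succ - p l.castSucc) - p_o
              = (p l.castSucc + s • (p l.succ - p l.castSucc) - q) + (q - p_o) := by abel
          rw [this]; exact norm_add_le _ _
      _ ≤ L + d_min := add_le_add (hchain l s hs) hle
  -- bound each integral
  set C : ℝ := k₁ * (L + d_min) + k₂ with hC
  have hint : ∀ l : Fin n,
      (∫ s in (0 : ℝ)..1,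
        (k₁ * ‖p l.castSucc + s • (p l.succ - p l.castSucc) - p_o‖
          + k₂ * Real.tanh (v l s))) ≤ C := by
    intro l
    have hcont : Continuous fun s : ℝ =>
        k₁ * ‖p l.castSucc + s • (p l.succ - p l.castSucc) - p_o‖ := by
      fun_prop
    have hI1 : IntervalIntegrable
        (fun s : ℝ => k₁ * ‖p l.castSucc + s • (p l.succ - p l.castSucc) - p_o‖)
        volume 0 1 := hcont.intervalIntegrable 0 1
    have hmeas : Measurable fun s : ℝ => k₂ * Real.tanh (v l s) :=
      (my_continuous_tanh.measurable.comp (hv l)).const_mul k₂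
    have hI2 : IntervalIntegrable (fun s : ℝ => k₂ * Real.tanh (v l s)) volume 0 1 := by
      rw [intervalIntegrable_iff]
      have hfin : volume (Set.uIoc (0:ℝ) 1) < ⊤ := by
        rw [Set.uIoc_of_le zero_le_one]
        exact measure_Ioc_lt_top
      refine Integrable.mono' (g := fun _ => k₂)
        (integrableOn_const hfin.ne) hmeas.aestronglyMeasurable ?_
      filter_upwards with s
      rw [Real.norm_eq_abs, abs_mul, abs_of_nonneg hk₂]
      calc k₂ * |Real.tanh (v l s)| ≤ k₂ * 1 :=
            mul_le_mul_of_nonneg_left (my_abs_tanh_le_one _) hk₂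
        _ = k₂ := mul_one _
    have hIsum : IntervalIntegrable
        (fun s : ℝ => k₁ * ‖p l.castSucc + s • (p l.succ - p l.castSucc) - p_o‖
          + k₂ * Real.tanh (v l s)) volume 0 1 := hI1.add hI2
    have hmono := intervalIntegral.integral_mono_on (μ := volume) (a := (0:ℝ)) (b := 1)
      zero_le_one hIsum (intervalIntegrable_const (c := C)) ?_
    · calc _ ≤ ∫ _ in (0:ℝ)..1, C := hmono
        _ = C := by simp
    · intro s hs
      have h1 : k₁ * ‖p l.castSucc + s • (p l.succ - p l.castSucc) - p_o‖
          ≤ k₁ * (L + d_min) := mul_le_mul_of_nonneg_left (hdist l s hs) hk₁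
      have h2 : k₂ * Real.tanh (v l s) ≤ k₂ * 1 := by
        refine mul_le_mul_of_nonneg_left ?_ hk₂
        have := my_abs_tanh_le_one (v l s)
        exact (abs_le.mp this).2
      rw [hC]; linarith
  -- sum up
  have hFle : F ≤ n * C := by
    rw [hF]
    calc ∑ l : Fin n, ∫ s in (0 : ℝ)..1,
          (k₁ * ‖p l.castSucc + s • (p l.succ - p l.castSucc) - p_o‖
            + k₂ * Real.tanh (v l s))
        ≤ ∑ _l : Fin n, C := Finset.sum_le_sum (fun l _ => hint l)
      _ = n * C := by simp [mul_comm]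
  have hfinal : (n : ℝ) * C ≤ k₁ * ((2 * n + 1) / 2 * L + n * d_min) + k₂ * n := by
    rw [hC]
    have hn1 : (1 : ℝ) ≤ (n : ℝ) := by exact_mod_cast hn
    nlinarith [mul_nonneg hk₁ hLnn]
  exact absurd hFbig (not_lt.mpr (hFle.trans hfinal))
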